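/- For every s with 0 < s ≤ 1, the vector |E₁;s⟩ = [√N·(E₀(s) − s)·|s⟩ + s·|m⟩] / √(E₀(s)² + (N−1)·(E₀(s) − s)²) is a unit vector and is an eigenvector of H(s) with eigenvalue E₁(s), i.e. H(s)|E₁;s⟩ = E₁(s)·|E₁;s⟩ and ‖|E₁;s⟩‖ = 1. -/

import Mathlib

/-!
Write `H(s) = I − [(1−s)|s⟩⟨s| + s|m⟩⟨m|]`. The rank-two part preserves the plane spanned by
`|s⟩` and `|m⟩`, where `⟨s|m⟩ = 1/√N`, and a vector `a|s⟩ + b|m⟩` is an eigenvector of it with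
eigenvalue `μ` as soon as `(1−s)(a + b/√N) = μa` and `s(a/√N + b) = μb`. For `μ = E₀(s)`,
`a = √N(E₀ − s)` and `b = s` the second equation is immediate and the first reduces to
`N·E₀(1−E₀) = (N−1)s(1−s)`, the quadratic equation of which `E₀` is a root. Hence `H(s)` has
eigenvalue `1 − E₀ = E₁` there, and the squared norm of `a|s⟩ + b|m⟩` is
`a² + 2ab/√N + b² = E₀² + (N−1)(E₀ − s)²`.
-/

/-- The rank-one projector `|ψ⟩⟨ψ|`. -/
noncomputable def proj {H : Type*} [NormedAddCommGroup H] [InnerProductSpace ℂ H]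
    (ψ : H) : H →L[ℂ] H := (innerSL ℂ ψ).smulRight ψ

noncomputable def uniformState (N : ℕ) : EuclideanSpace ℂ (Fin N) :=
  ((1 / Real.sqrt N : ℝ) : ℂ) • ∑ x : Fin N, EuclideanSpace.single x (1 : ℂ)

noncomputable def E₀ (N : ℕ) (s : ℝ) : ℝ :=
  (1 - Real.sqrt (1 - 4 * ((N - 1 : ℝ) / N) * s * (1 - s))) / 2

noncomputable def E₁ (N : ℕ) (s : ℝ) : ℝ :=
  (1 + Real.sqrt (1 - 4 * ((N - 1 : ℝ) / N) * s * (1 - s))) / 2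

open scoped InnerProductSpace

section TwoProjections

variable {H : Type*} [NormedAddCommGroup H] [InnerProductSpace ℂ H]

theorem proj_apply (ψ φ : H) : proj ψ φ = ⟪ψ, φ⟫_ℂ • ψ := rfl

theorem smul_one_sub_proj_add_smul_one_sub_proj_apply {u e : H} (hu : ‖u‖ = 1) (he : ‖e‖ = 1)
    {c : ℝ} (hue : ⟪u, e⟫_ℂ = c) {s a b μ : ℝ}
    (h₁ : (1 - s) * (a + c * b) = μ * a) (h₂ : s * (c * a + b) = μ * b) :
    (((1 - s : ℝ) : ℂ) • (1 - proj u) + (s : ℂ) • (1 - proj e)) ((a : ℂ) • u + (b : ℂ) • e) =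
      ((1 - μ : ℝ) : ℂ) • ((a : ℂ) • u + (b : ℂ) • e) := by
  have heu : ⟪e, u⟫_ℂ = c := by rw [← inner_conj_symm, hue, Complex.conj_ofReal]
  have huu : ⟪u, u⟫_ℂ = 1 := by simp [inner_self_eq_norm_sq_to_K, hu]
  have hee : ⟪e, e⟫_ℂ = 1 := by simp [inner_self_eq_norm_sq_to_K, he]
  have h₁' : ((1 - s : ℝ) : ℂ) * (a + c * b) = μ * a := by exact_mod_cast h₁
  have h₂' : (s : ℂ) * (c * a + b) = μ * b := by exact_mod_cast h₂
  simp only [add_apply, smul_apply, sub_apply, one_apply_eq_self, proj_apply, inner_add_right,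
    inner_smul_right, huu, hue, heu, hee]
  push_cast at h₁' ⊢
  linear_combination (norm := module) (-h₁') • u - h₂' • e

theorem norm_smul_add_smul_sq {u e : H} (hu : ‖u‖ = 1) (he : ‖e‖ = 1) {c : ℝ}
    (hue : ⟪u, e⟫_ℂ = c) (a b : ℝ) :
    ‖(a : ℂ) • u + (b : ℂ) • e‖ ^ 2 = a ^ 2 + 2 * a * b * c + b ^ 2 := by
  rw [@norm_add_sq ℂ, norm_smul, norm_smul, inner_smul_left, inner_smul_right, hue, hu, he]
  simp only [Complex.conj_ofReal, ← Complex.ofReal_mul, RCLike.re_to_complex, Complex.ofReal_re,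
    Complex.norm_real, Real.norm_eq_abs, mul_one, sq_abs]
  ring

end TwoProjections

theorem uniformState_apply (N : ℕ) (x : Fin N) :
    uniformState N x = ((1 / Real.sqrt N : ℝ) : ℂ) := by
  classical
  simp [uniformState, WithLp.ofLp_sum, Finset.sum_apply]

theorem inner_uniformState_single (N : ℕ) (m : Fin N) :
    ⟪uniformState N, EuclideanSpace.single m (1 : ℂ)⟫_ℂ = ((1 / Real.sqrt N : ℝ) : ℂ) := by
  simp [EuclideanSpace.inner_single_right, uniformState_apply, Complex.conj_ofReal]

theorem norm_uniformState {N : ℕ} (hN : 0 < N) : ‖uniformState N‖ = 1 := by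
  have hN' : (0 : ℝ) < N := by exact_mod_cast hN
  simp [EuclideanSpace.norm_eq, uniformState_apply, Real.sq_sqrt hN'.le, hN'.ne']

theorem discriminant_nonneg {N : ℕ} (hN : 0 < N) (s : ℝ) :
    0 ≤ 1 - 4 * ((N - 1 : ℝ) / N) * s * (1 - s) := by
  have hN' : (1 : ℝ) ≤ N := by exact_mod_cast hN
  have hk₀ : 0 ≤ (N - 1 : ℝ) / N := div_nonneg (by linarith) (by linarith)
  have hk₁ : (N - 1 : ℝ) / N ≤ 1 := by rw [div_le_one (by linarith)]; linarith
  nlinarith [sq_nonneg (1 - 2 * s), mul_nonneg hk₀ (sq_nonneg (1 - 2 * s))]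

theorem E₀_mul_one_sub_E₀ {N : ℕ} (hN : 0 < N) (s : ℝ) :
    N * (E₀ N s * (1 - E₀ N s)) = (N - 1) * (s * (1 - s)) := by
  have hN' : (N : ℝ) ≠ 0 := by exact_mod_cast hN.ne'
  have hk : (N : ℝ) * ((N - 1) / N) = N - 1 := by field_simp
  have hsq := Real.sq_sqrt (discriminant_nonneg hN s)
  unfold E₀
  linear_combination (-(N : ℝ) / 4) * hsq + s * (1 - s) * hk

theorem E₁_eq_one_sub_E₀ (N : ℕ) (s : ℝ) : E₁ N s = 1 - E₀ N s := by
  unfold E₀ E₁; ring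

/-- For the interpolating Hamiltonian `H(s) = (1−s)(I−|s⟩⟨s|) + s(I−|m⟩⟨m|)` of
the adiabatic quantum search, for every `s` with `0 < s ≤ 1` the vector
`|E₁;s⟩ = [√N(E₀(s)−s)|s⟩ + s|m⟩] / √(E₀(s)² + (N−1)(E₀(s)−s)²)` is a unit
eigenvector of `H(s)` with eigenvalue `E₁(s)`. -/
theorem excitedState_interpolatingHamiltonian (N : ℕ) (hN : 2 ≤ N) (m : Fin N)
    (s : ℝ) (hs : s ∈ Set.Ioc (0:ℝ) 1)
    (Hs : EuclideanSpace ℂ (Fin N) →L[ℂ] EuclideanSpace ℂ (Fin N))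
    (hHs : Hs = ((1 - s : ℝ) : ℂ) • (1 - proj (uniformState N)) +
      ((s : ℝ) : ℂ) • (1 - proj (EuclideanSpace.single m 1)))
    (v : EuclideanSpace ℂ (Fin N))
    (hv : v = ((1 / Real.sqrt ((E₀ N s)^2 + (N - 1 : ℝ) * (E₀ N s - s)^2) : ℝ) : ℂ) •
      (((Real.sqrt N * (E₀ N s - s) : ℝ) : ℂ) • uniformState N +
        ((s : ℝ) : ℂ) • EuclideanSpace.single m (1 : ℂ))) :
    Hs v = ((E₁ N s : ℝ) : ℂ) • v ∧ ‖v‖ = 1 := by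
  have hN₀ : 0 < N := by omega
  have hN₂ : (2 : ℝ) ≤ N := by exact_mod_cast hN
  have hr : Real.sqrt N * Real.sqrt N = N := Real.mul_self_sqrt (by positivity)
  have hE := E₀_mul_one_sub_E₀ hN₀ s
  set E := E₀ N s
  have hu := norm_uniformState hN₀
  have he : ‖EuclideanSpace.single m (1 : ℂ)‖ = 1 := by simp
  have hue := inner_uniformState_single N m
  have heigen := smul_one_sub_proj_add_smul_one_sub_proj_apply hu he hue
    (s := s) (a := Real.sqrt N * (E - s)) (b := s) (μ := E)
    (by field_simp; linear_combination hr * (E - s) * (1 - s - E) + hE) (by field_simp; ring)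
  have hnorm : ‖((Real.sqrt N * (E - s) : ℝ) : ℂ) • uniformState N +
      (s : ℂ) • EuclideanSpace.single m (1 : ℂ)‖ = Real.sqrt (E ^ 2 + (N - 1) * (E - s) ^ 2) := by
    rw [← Real.sqrt_sq (norm_nonneg _), norm_smul_add_smul_sq hu he hue]
    congr 1
    field_simp
    linear_combination (E - s) ^ 2 * hr
  have hpos : 0 < E ^ 2 + (N - 1) * (E - s) ^ 2 := by
    -- `E² + (E − s)² = ((2E − s)² + s²) / 2` and `s > 0`
    nlinarith [hs.1, sq_nonneg (2 * E - s), sq_nonneg (E - s)]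
  subst hHs hv
  refine ⟨by rw [map_smul, heigen, E₁_eq_one_sub_E₀, smul_comm], ?_⟩
  rw [norm_smul, hnorm, Complex.norm_real, Real.norm_eq_abs, abs_of_pos (by positivity),
    one_div_mul_cancel (Real.sqrt_pos.mpr hpos).ne']
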